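/- arXiv:1302.4660 — 3 statements merged into one kernel-verified Lean document; each statement's English description precedes it below -/
import Mathlib

section
/- (Theorem 1, diversity order.) Assume μ1 = μ2 = 0. If (r1 + r2)/2 < r12, then the diversity order of the Bhattacharyya upper bound equals d = (2·r12 − r1 − r2)/4; that is, lim_{σ² → 0+} log P̄_err(σ²) / log σ² = (2·r12 − r1 − r2)/4. -/
open Matrix MeasureTheory Filter Real Topology

/-!
With equal means the quadratic term of `K` vanishes and, up to a constant, `K(σ²)` is
`½ log det(A + σ²I) - ¼ log det(B₁ + σ²I) - ¼ log det(B₂ + σ²I)` for the positive semidefinite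
matrices `A = Φ(Σ₁ + Σ₂)Φᵀ` and `Bᵢ = ΦΣᵢΦᵀ`. Diagonalising, `log det(B + σ²I)` is
`∑ᵢ log(λᵢ + σ²)`, and after division by `log σ²` each zero eigenvalue tends to `1` and each
nonzero one to `0`, so `log det(B + σ²I) / log σ² → M - rank B`. The constants, including
`log √(P₁P₂)`, disappear in the limit.
-/

/-- Pseudo-determinant of a real square matrix: the product of the nonzero
eigenvalues when the matrix is Hermitian (symmetric), with the empty product
equal to 1; junk value 0 otherwise. -/
noncomputable def pdet {n : ℕ} (A : Matrix (Fin n) (Fin n) ℝ) : ℝ :=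
  if h : A.IsHermitian then
    ∏ i ∈ Finset.univ.filter (fun i => h.eigenvalues i ≠ 0), h.eigenvalues i
  else 0

/-- Bhattacharyya exponent `K(σ²)` for the two-class compressive
classification problem, as a function of the noise level `s = σ²`. -/
noncomputable def Kb {M N : ℕ} (Φ : Matrix (Fin M) (Fin N) ℝ)
    (S1 S2 : Matrix (Fin N) (Fin N) ℝ) (μ1 μ2 : Fin N → ℝ) (s : ℝ) : ℝ :=
  1/8 * ((Φ *ᵥ (μ1 - μ2)) ⬝ᵥ
      (((1/2 : ℝ) • (Φ * (S1 + S2) * Φᵀ + s • (1 : Matrix (Fin M) (Fin M) ℝ)))⁻¹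
        *ᵥ (Φ *ᵥ (μ1 - μ2))))
  + 1/2 * Real.log
      (((1/2 : ℝ) • (Φ * (S1 + S2) * Φᵀ + s • (1 : Matrix (Fin M) (Fin M) ℝ))).det /
        Real.sqrt ((Φ * S1 * Φᵀ + s • (1 : Matrix (Fin M) (Fin M) ℝ)).det *
          (Φ * S2 * Φᵀ + s • (1 : Matrix (Fin M) (Fin M) ℝ)).det))

/-- Bhattacharyya upper bound `P̄_err(σ²)` to the misclassification probability. -/
noncomputable def Perr {M N : ℕ} (Φ : Matrix (Fin M) (Fin N) ℝ)
    (S1 S2 : Matrix (Fin N) (Fin N) ℝ) (μ1 μ2 : Fin N → ℝ) (P1 P2 : ℝ) (s : ℝ) : ℝ :=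
  Real.sqrt (P1 * P2) * Real.exp (-(Kb Φ S1 S2 μ1 μ2 s))

theorem tendsto_log_add_div_log_nhdsGT_zero {c : ℝ} (hc : c ≠ 0) :
    Tendsto (fun s => Real.log (c + s) / Real.log s) (𝓝[>] 0) (𝓝 0) := by
  have hcont : ContinuousAt (fun s => Real.log (c + s)) 0 :=
    (continuousAt_log (by simpa using hc)).comp (continuousAt_const.add continuousAt_id)
  exact (hcont.tendsto.mono_left nhdsWithin_le_nhds).div_atBot tendsto_log_nhdsGT_zero

theorem tendsto_log_div_log_self_nhdsGT_zero :
    Tendsto (fun s => Real.log s / Real.log s) (𝓝[>] 0) (𝓝 1) := by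
  refine tendsto_const_nhds.congr' ?_
  filter_upwards [Ioo_mem_nhdsGT (zero_lt_one' ℝ)] with s hs
  exact (div_self (log_neg hs.1 hs.2).ne).symm

section

variable {n : Type*} [Fintype n] [DecidableEq n] {B : Matrix n n ℝ}

theorem Matrix.IsHermitian.det_add_smul_one (hB : B.IsHermitian) (s : ℝ) :
    (B + s • 1).det = ∏ i, (hB.eigenvalues i + s) := by
  have h := congrArg (Polynomial.eval (-s)) hB.charpoly_eq
  have hneg : scalar n (-s) - B = -(B + s • 1) := by
    rw [scalar_apply, ← smul_one_eq_diagonal, neg_smul]; abel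
  simp only [eval_charpoly, Polynomial.eval_prod, Polynomial.eval_sub, Polynomial.eval_X,
    Polynomial.eval_C, RCLike.ofReal_real_eq_id, id, hneg, det_neg] at h
  have hprod : ∏ i, (-s - hB.eigenvalues i)
      = (-1) ^ Fintype.card n * ∏ i, (hB.eigenvalues i + s) := by
    rw [← Finset.card_univ, ← Finset.prod_const, ← Finset.prod_mul_distrib]
    exact Finset.prod_congr rfl fun i _ => by ring
  rw [hprod] at h
  exact mul_left_cancel₀ (pow_ne_zero _ (by norm_num)) h

theorem Matrix.PosSemidef.det_add_smul_one_pos (hB : B.PosSemidef) {s : ℝ} (hs : 0 < s) :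
    0 < (B + s • 1).det := by
  rw [hB.isHermitian.det_add_smul_one]
  exact Finset.prod_pos fun i _ => by linarith [hB.eigenvalues_nonneg i]

theorem Matrix.PosSemidef.tendsto_log_det_add_smul_one_div_log (hB : B.PosSemidef) :
    Tendsto (fun s => Real.log (B + s • 1).det / Real.log s) (𝓝[>] 0)
      (𝓝 (Fintype.card n - B.rank)) := by
  have hlim : ∀ i, Tendsto (fun s => Real.log (hB.isHermitian.eigenvalues i + s) / Real.log s)
      (𝓝[>] 0) (𝓝 (if hB.isHermitian.eigenvalues i = 0 then 1 else 0)) := by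
    intro i
    split_ifs with h
    · simpa [h] using tendsto_log_div_log_self_nhdsGT_zero
    · exact tendsto_log_add_div_log_nhdsGT_zero h
  have hsum := tendsto_finsetSum Finset.univ fun i _ => hlim i
  have hcard : (∑ i, if hB.isHermitian.eigenvalues i = 0 then (1 : ℝ) else 0)
      = Fintype.card n - B.rank := by
    rw [Finset.sum_boole, hB.isHermitian.rank_eq_card_non_zero_eigs, Fintype.card_subtype,
      ← Finset.card_univ, ← Finset.card_filter_add_card_filter_not (s := Finset.univ)
        (fun i => hB.isHermitian.eigenvalues i = 0)]
    push_cast; ring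
  rw [hcard] at hsum
  refine hsum.congr' ?_
  filter_upwards [self_mem_nhdsWithin] with s (hs : 0 < s)
  rw [hB.isHermitian.det_add_smul_one, Real.log_prod, Finset.sum_div]
  exact fun i _ => by linarith [hB.eigenvalues_nonneg i]

end

theorem Matrix.PosSemidef.mul_mul_transpose_same {m n : Type*} [Fintype m] [Fintype n]
    {S : Matrix n n ℝ} (hS : S.PosSemidef) (Φ : Matrix m n ℝ) : (Φ * S * Φᵀ).PosSemidef := by
  simpa only [conjTranspose_eq_transpose_of_trivial] using hS.mul_mul_conjTranspose_same Φ

section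

variable {M N : ℕ} (Φ : Matrix (Fin M) (Fin N) ℝ) {S1 S2 : Matrix (Fin N) (Fin N) ℝ}

theorem Kb_same_mean_eq (hS1 : S1.PosSemidef) (hS2 : S2.PosSemidef) (μ : Fin N → ℝ) {s : ℝ}
    (hs : 0 < s) :
    Kb Φ S1 S2 μ μ s = 1/2 * Real.log (Φ * (S1 + S2) * Φᵀ + s • 1).det
      - 1/4 * Real.log (Φ * S1 * Φᵀ + s • 1).det - 1/4 * Real.log (Φ * S2 * Φᵀ + s • 1).det
      - M / 2 * Real.log 2 := by
  have hA := ((hS1.add hS2).mul_mul_transpose_same Φ).det_add_smul_one_pos hs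
  have h1 := (hS1.mul_mul_transpose_same Φ).det_add_smul_one_pos hs
  have h2 := (hS2.mul_mul_transpose_same Φ).det_add_smul_one_pos hs
  rw [Kb, sub_self, mulVec_zero, zero_dotProduct, mul_zero, zero_add, det_smul,
    Fintype.card_fin, Real.log_div (by positivity) (by positivity), Real.log_mul (by positivity)
    hA.ne', Real.log_pow, Real.log_sqrt (by positivity), Real.log_mul h1.ne' h2.ne', one_div,
    Real.log_inv]
  ring

theorem tendsto_Kb_same_mean_div_log (hS1 : S1.PosSemidef) (hS2 : S2.PosSemidef)
    (μ : Fin N → ℝ) :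
    Tendsto (fun s => Kb Φ S1 S2 μ μ s / Real.log s) (𝓝[>] 0)
      (𝓝 (((Φ * S1 * Φᵀ).rank + (Φ * S2 * Φᵀ).rank - 2 * (Φ * (S1 + S2) * Φᵀ).rank : ℝ) / 4)) := by
  have hA := ((hS1.add hS2).mul_mul_transpose_same Φ).tendsto_log_det_add_smul_one_div_log
  have h1 := (hS1.mul_mul_transpose_same Φ).tendsto_log_det_add_smul_one_div_log
  have h2 := (hS2.mul_mul_transpose_same Φ).tendsto_log_det_add_smul_one_div_log
  have hc := (tendsto_const_nhds (x := M / 2 * Real.log 2)).div_atBot tendsto_log_nhdsGT_zero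
  simp only [Fintype.card_fin] at hA h1 h2
  have := (((hA.const_mul (1/2)).sub (h1.const_mul (1/4))).sub (h2.const_mul (1/4))).sub hc
  refine (this.congr' ?_).trans_eq ?_
  · filter_upwards [self_mem_nhdsWithin] with s (hs : 0 < s)
    rw [Kb_same_mean_eq Φ hS1 hS2 μ hs]
    ring
  · congr 1; ring

end

theorem theorem1_diversity_order_general (M N : ℕ)
    (Φ : Matrix (Fin M) (Fin N) ℝ) (S1 S2 : Matrix (Fin N) (Fin N) ℝ)
    (hS1 : S1.PosSemidef) (hS2 : S2.PosSemidef) (μ1 μ2 : Fin N → ℝ)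
    (hμ1 : μ1 = 0) (hμ2 : μ2 = 0)
    (P1 P2 : ℝ) (hP1 : 0 < P1) (hP2 : 0 < P2) :
    Filter.Tendsto
      (fun s : ℝ => Real.log (Perr Φ S1 S2 μ1 μ2 P1 P2 s) / Real.log s) (𝓝[>] 0)
      (𝓝 ((2 * ((Φ * (S1 + S2) * Φᵀ).rank : ℝ) - ((Φ * S1 * Φᵀ).rank : ℝ)
        - ((Φ * S2 * Φᵀ).rank : ℝ)) / 4)) := by
  subst hμ1 hμ2
  have hc := (tendsto_const_nhds (x := Real.log √(P1 * P2))).div_atBot tendsto_log_nhdsGT_zero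
  have hlim := hc.sub (tendsto_Kb_same_mean_div_log Φ hS1 hS2 0)
  refine (hlim.congr fun s => ?_).trans_eq (by congr 1; ring)
  rw [Perr, Real.log_mul (by positivity) (Real.exp_pos _).ne', Real.log_exp]
  ring

/-- Theorem 1, diversity order: with zero-mean classes, if
`(r1 + r2)/2 < r12`, then `lim_{σ²→0⁺} log P̄_err(σ²) / log σ²
= (2 r12 - r1 - r2)/4`. -/
theorem theorem1_diversity_order (M N : ℕ) (hM : 0 < M) (hN : 0 < N)
    (Φ : Matrix (Fin M) (Fin N) ℝ) (S1 S2 : Matrix (Fin N) (Fin N) ℝ)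
    (hS1 : S1.PosSemidef) (hS2 : S2.PosSemidef) (μ1 μ2 : Fin N → ℝ)
    (hμ1 : μ1 = 0) (hμ2 : μ2 = 0)
    (P1 P2 : ℝ) (hP1 : 0 < P1) (hP2 : 0 < P2) (hP : P1 + P2 = 1)
    (hrank : (Φ * S1 * Φᵀ).rank + (Φ * S2 * Φᵀ).rank < 2 * (Φ * (S1 + S2) * Φᵀ).rank) :
    Filter.Tendsto
      (fun s : ℝ => Real.log (Perr Φ S1 S2 μ1 μ2 P1 P2 s) / Real.log s) (𝓝[>] 0)
      (𝓝 ((2 * ((Φ * (S1 + S2) * Φᵀ).rank : ℝ) - ((Φ * S1 * Φᵀ).rank : ℝ)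
        - ((Φ * S2 * Φᵀ).rank : ℝ)) / 4)) :=
  theorem1_diversity_order_general M N Φ S1 S2 hS1 hS2 μ1 μ2 hμ1 hμ2 P1 P2 hP1 hP2
end

section
/- (Theorem 1, measurement gain.) Assume μ1 = μ2 = 0 and (r1 + r2)/2 < r12, and set d = (2·r12 − r1 − r2)/4. Then lim_{σ² → 0+} P̄_err(σ²) / (σ²)^d = sqrt(P1·P2)·( 2^{−M}·v12 / sqrt(v1·v2) )^{−1/2}; equivalently, P̄_err(σ²) = (g_m/σ²)^{−d} + o((σ²)^d) as σ² → 0+, where the measurement gain g_m is defined by g_m^{−d} = sqrt(P1·P2)·( 2^{−M}·v12 / sqrt(v1·v2) )^{−1/2}. -/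
/-!
For positive semidefinite `A` of size `M`,
`det (A + s • 1) = ∏_{λ ≠ 0} (λ + s) · s ^ (M - rank A)`, where the product is continuous in `s`,
positive for `s ≥ 0`, and equals the pseudo-determinant at `s = 0`. Applied to the three
covariances, this writes the determinant ratio inside `K(s)` as `c(s) · s ^ (-2d)` with `c`
continuous and positive on `[0, ∞)`. Hence `P̄_err(s) / s ^ d = √(P1 P2) · c(s) ^ (-1/2)` for
`s > 0`, and the limit is the value at `s = 0`, where `c(0) = 2^{-M} v12 / √(v1 v2)`.
-/

open Matrix MeasureTheory Filter Real Topology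

namespace Matrix

lemma PosSemidef.mul_mul_transpose {m n : Type*} [Fintype m] [Fintype n] {S : Matrix n n ℝ}
    (hS : S.PosSemidef) (Φ : Matrix m n ℝ) : (Φ * S * Φᵀ).PosSemidef := by
  simpa only [conjTranspose_eq_transpose_of_trivial] using hS.mul_mul_conjTranspose_same Φ

variable {n : Type*} [Fintype n] [DecidableEq n] {A B C : Matrix n n ℝ}

open Polynomial in
lemma IsHermitian.det_add_smul_one_s4 (hA : A.IsHermitian) (s : ℝ) :
    (A + s • (1 : Matrix n n ℝ)).det = ∏ i, (hA.eigenvalues i + s) := by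
  have h := congrArg (eval (-s)) hA.charpoly_eq
  rw [eval_charpoly, eval_prod] at h
  have : A + s • (1 : Matrix n n ℝ) = -(scalar n (-s) - A) := by
    rw [neg_sub, map_neg, sub_neg_eq_add, scalar_apply, smul_one_eq_diagonal]
  rw [this, det_neg, h, ← Finset.card_univ, ← Finset.prod_const, ← Finset.prod_mul_distrib]
  simp

noncomputable def IsHermitian.shiftedPdet (hA : A.IsHermitian) (s : ℝ) : ℝ :=
  ∏ i ∈ Finset.univ.filter (fun i => hA.eigenvalues i ≠ 0), (hA.eigenvalues i + s)

namespace IsHermitian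

lemma det_add_smul_one_eq_shiftedPdet_mul_pow (hA : A.IsHermitian) (s : ℝ) :
    (A + s • (1 : Matrix n n ℝ)).det = hA.shiftedPdet s * s ^ (Fintype.card n - A.rank) := by
  have hcard : (Finset.univ.filter (fun i => ¬hA.eigenvalues i ≠ 0)).card
      = Fintype.card n - A.rank := by
    rw [Finset.filter_not, Finset.card_sdiff_of_subset (Finset.filter_subset _ _),
      Finset.card_univ, hA.rank_eq_card_non_zero_eigs, Fintype.card_subtype]
  rw [hA.det_add_smul_one_s4,
    ← Finset.prod_filter_mul_prod_filter_not _ (fun i => hA.eigenvalues i ≠ 0), ← hcard,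
    ← Finset.prod_const]
  congr 1
  refine Finset.prod_congr rfl fun i hi => ?_
  rw [not_not.mp (Finset.mem_filter.mp hi).2, zero_add]

lemma continuous_shiftedPdet (hA : A.IsHermitian) : Continuous hA.shiftedPdet :=
  continuous_finsetProd _ fun _ _ => continuous_const.add continuous_id

lemma shiftedPdet_zero {m : ℕ} {A : Matrix (Fin m) (Fin m) ℝ} (hA : A.IsHermitian) :
    hA.shiftedPdet 0 = pdet A := by
  simp only [shiftedPdet, pdet, dif_pos hA, add_zero]

end IsHermitian

lemma PosSemidef.shiftedPdet_pos (hA : A.PosSemidef) {s : ℝ} (hs : 0 ≤ s) :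
    0 < hA.1.shiftedPdet s :=
  Finset.prod_pos fun i hi => add_pos_of_pos_of_nonneg
    ((hA.eigenvalues_nonneg i).lt_of_ne' (Finset.mem_filter.mp hi).2) hs

noncomputable def detRatioCoeff (hA : A.IsHermitian) (hB : B.IsHermitian) (hC : C.IsHermitian)
    (s : ℝ) : ℝ :=
  (1 / 2 : ℝ) ^ Fintype.card n * hC.shiftedPdet s / √(hA.shiftedPdet s * hB.shiftedPdet s)

lemma detRatioCoeff_pos (hA : A.PosSemidef) (hB : B.PosSemidef) (hC : C.PosSemidef) {s : ℝ}
    (hs : 0 ≤ s) : 0 < detRatioCoeff hA.1 hB.1 hC.1 s :=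
  div_pos (mul_pos (by positivity) (hC.shiftedPdet_pos hs))
    (sqrt_pos.mpr (mul_pos (hA.shiftedPdet_pos hs) (hB.shiftedPdet_pos hs)))

lemma continuousAt_detRatioCoeff (hA : A.PosSemidef) (hB : B.PosSemidef) (hC : C.IsHermitian)
    {s : ℝ} (hs : 0 ≤ s) : ContinuousAt (detRatioCoeff hA.1 hB.1 hC) s :=
  ((continuous_const.mul hC.continuous_shiftedPdet).continuousAt).div
    (continuous_sqrt.comp
      (hA.1.continuous_shiftedPdet.mul hB.1.continuous_shiftedPdet)).continuousAt
    (sqrt_pos.mpr (mul_pos (hA.shiftedPdet_pos hs) (hB.shiftedPdet_pos hs))).ne'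

lemma detRatioCoeff_zero {m : ℕ} {A B C : Matrix (Fin m) (Fin m) ℝ} (hA : A.IsHermitian)
    (hB : B.IsHermitian) (hC : C.IsHermitian) :
    detRatioCoeff hA hB hC 0 = (2 : ℝ) ^ (-(m : ℝ)) * pdet C / √(pdet A * pdet B) := by
  rw [detRatioCoeff, hA.shiftedPdet_zero, hB.shiftedPdet_zero, hC.shiftedPdet_zero,
    Fintype.card_fin, rpow_neg zero_le_two, rpow_natCast, one_div, inv_pow]

lemma log_det_ratio_eq (hA : A.PosSemidef) (hB : B.PosSemidef) (hC : C.PosSemidef) {s : ℝ}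
    (hs : 0 < s) :
    log (((1 / 2 : ℝ) • (C + s • (1 : Matrix n n ℝ))).det /
        √((A + s • (1 : Matrix n n ℝ)).det * (B + s • (1 : Matrix n n ℝ)).det))
      = log (detRatioCoeff hA.1 hB.1 hC.1 s)
        - (2 * C.rank - A.rank - B.rank : ℝ) / 2 * log s := by
  have hA' := hA.shiftedPdet_pos hs.le
  have hB' := hB.shiftedPdet_pos hs.le
  have hC' := hC.shiftedPdet_pos hs.le
  rw [det_smul, hA.1.det_add_smul_one_eq_shiftedPdet_mul_pow,
    hB.1.det_add_smul_one_eq_shiftedPdet_mul_pow, hC.1.det_add_smul_one_eq_shiftedPdet_mul_pow,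
    detRatioCoeff, log_div (by positivity) (by positivity), log_div (by positivity) (by positivity),
    log_sqrt (by positivity), log_sqrt (by positivity)]
  simp (disch := positivity) only [log_mul, log_pow]
  rw [Nat.cast_sub A.rank_le_card_height, Nat.cast_sub B.rank_le_card_height,
    Nat.cast_sub C.rank_le_card_height]
  ring

end Matrix

lemma Kb_self {M N : ℕ} (Φ : Matrix (Fin M) (Fin N) ℝ) (S1 S2 : Matrix (Fin N) (Fin N) ℝ)
    (μ : Fin N → ℝ) (s : ℝ) :
    Kb Φ S1 S2 μ μ s = 1 / 2 * log
      (((1 / 2 : ℝ) • (Φ * (S1 + S2) * Φᵀ + s • (1 : Matrix (Fin M) (Fin M) ℝ))).det /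
        √((Φ * S1 * Φᵀ + s • (1 : Matrix (Fin M) (Fin M) ℝ)).det *
          (Φ * S2 * Φᵀ + s • (1 : Matrix (Fin M) (Fin M) ℝ)).det)) := by
  rw [Kb, sub_self, mulVec_zero, zero_dotProduct, mul_zero, zero_add]

theorem theorem1_measurement_gain_general (M N : ℕ)
    (Φ : Matrix (Fin M) (Fin N) ℝ) (S1 S2 : Matrix (Fin N) (Fin N) ℝ)
    (hS1 : S1.PosSemidef) (hS2 : S2.PosSemidef) (μ1 μ2 : Fin N → ℝ)
    (hμ1 : μ1 = 0) (hμ2 : μ2 = 0)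
    (P1 P2 : ℝ)
    (d : ℝ)
    (hd : d = (2 * ((Φ * (S1 + S2) * Φᵀ).rank : ℝ) - ((Φ * S1 * Φᵀ).rank : ℝ)
      - ((Φ * S2 * Φᵀ).rank : ℝ)) / 4) :
    Filter.Tendsto (fun s : ℝ => Perr Φ S1 S2 μ1 μ2 P1 P2 s / s ^ d) (𝓝[>] 0)
      (𝓝 (Real.sqrt (P1 * P2) *
        ((2:ℝ) ^ (-(M:ℝ)) * pdet (Φ * (S1 + S2) * Φᵀ) /
          Real.sqrt (pdet (Φ * S1 * Φᵀ) * pdet (Φ * S2 * Φᵀ))) ^ (-(1:ℝ)/2))) := by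
  subst hμ1 hμ2
  have hA := hS1.mul_mul_transpose Φ
  have hB := hS2.mul_mul_transpose Φ
  have hC := (hS1.add hS2).mul_mul_transpose Φ
  set c := detRatioCoeff hA.1 hB.1 hC.1
  have hratio : ∀ s ∈ Set.Ioi (0 : ℝ),
      Perr Φ S1 S2 0 0 P1 P2 s / s ^ d = √(P1 * P2) * c s ^ (-(1 : ℝ) / 2) := by
    intro s hs
    rw [Perr, Kb_self, log_det_ratio_eq hA hB hC hs, rpow_def_of_pos hs,
      rpow_def_of_pos (detRatioCoeff_pos hA hB hC hs.le), mul_div_assoc, ← exp_sub, hd]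
    ring_nf
  have hlim : Tendsto (fun s => √(P1 * P2) * c s ^ (-(1 : ℝ) / 2)) (𝓝 0)
      (𝓝 (√(P1 * P2) * c 0 ^ (-(1 : ℝ) / 2))) :=
    (((continuousAt_detRatioCoeff hA hB hC.1 le_rfl).rpow_const
      (Or.inl (detRatioCoeff_pos hA hB hC le_rfl).ne')).const_mul _).tendsto
  rw [show c 0 = _ from detRatioCoeff_zero hA.1 hB.1 hC.1] at hlim
  refine (hlim.mono_left nhdsWithin_le_nhds).congr' ?_
  exact eventually_nhdsWithin_of_forall fun s hs => (hratio s hs).symm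

/-- Theorem 1, measurement gain: with zero-mean classes, if
`(r1 + r2)/2 < r12` and `d = (2 r12 - r1 - r2)/4`, then
`lim_{σ²→0⁺} P̄_err(σ²) / (σ²)^d = sqrt(P1 P2) (2^{-M} v12 / sqrt(v1 v2))^{-1/2}`,
i.e. `P̄_err(σ²) = (g_m/σ²)^{-d} + o((σ²)^d)` where the measurement gain `g_m`
is defined by `g_m^{-d} = sqrt(P1 P2) (2^{-M} v12 / sqrt(v1 v2))^{-1/2}`. -/
theorem theorem1_measurement_gain (M N : ℕ) (hM : 0 < M) (hN : 0 < N)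
    (Φ : Matrix (Fin M) (Fin N) ℝ) (S1 S2 : Matrix (Fin N) (Fin N) ℝ)
    (hS1 : S1.PosSemidef) (hS2 : S2.PosSemidef) (μ1 μ2 : Fin N → ℝ)
    (hμ1 : μ1 = 0) (hμ2 : μ2 = 0)
    (P1 P2 : ℝ) (hP1 : 0 < P1) (hP2 : 0 < P2) (hP : P1 + P2 = 1)
    (hrank : (Φ * S1 * Φᵀ).rank + (Φ * S2 * Φᵀ).rank < 2 * (Φ * (S1 + S2) * Φᵀ).rank)
    (d : ℝ)
    (hd : d = (2 * ((Φ * (S1 + S2) * Φᵀ).rank : ℝ) - ((Φ * S1 * Φᵀ).rank : ℝ)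
      - ((Φ * S2 * Φᵀ).rank : ℝ)) / 4) :
    Filter.Tendsto (fun s : ℝ => Perr Φ S1 S2 μ1 μ2 P1 P2 s / s ^ d) (𝓝[>] 0)
      (𝓝 (Real.sqrt (P1 * P2) *
        ((2:ℝ) ^ (-(M:ℝ)) * pdet (Φ * (S1 + S2) * Φᵀ) /
          Real.sqrt (pdet (Φ * S1 * Φᵀ) * pdet (Φ * S2 * Φᵀ))) ^ (-(1:ℝ)/2))) :=
  theorem1_measurement_gain_general M N Φ S1 S2 hS1 hS2 μ1 μ2 hμ1 hμ2 P1 P2 d hd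
end

section
/- (Theorem 3, in-image case.) Let C = Φ(Σ1+Σ2)Φᵀ and suppose Φ(μ1−μ2) = C z for some z ∈ ℝ^M (i.e., Φ(μ1−μ2) lies in the column space of C), and that (r1 + r2)/2 < r12. Set d = (2·r12 − r1 − r2)/4. Then lim_{σ² → 0+} P̄_err(σ²) / (σ²)^d = exp(−(1/4)·zᵀ C z) · sqrt(P1·P2)·( 2^{−M}·v12 / sqrt(v1·v2) )^{−1/2}; in particular the diversity order is the same as in the zero-mean case and the nonzero means only multiply the low-noise constant by the factor exp(−(1/4)·zᵀ C z) ≤ 1 (the quantity zᵀ C z does not depend on the choice of z with C z = Φ(μ1−μ2)). -/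
open Matrix MeasureTheory Filter Real Topology

/-!
Diagonalise a positive semidefinite `A = U diag(λ) Uᵀ`. Then
`det (A + s I) = ∏_{λᵢ ≠ 0} (λᵢ + s) · s ^ (M - rank A)`, so
`log det (A + s I) - (M - rank A) log s → log (pdet A)` as `s → 0⁺`; and with `w = Uᵀ z`,
`(C z)ᵀ (C + s I)⁻¹ (C z) = ∑ λᵢ² / (λᵢ + s) wᵢ² → ∑ λᵢ wᵢ² = zᵀ C z`.
In `K(s) + d log s` the multiples of `log s` cancel exactly for the given `d`, so
`P̄_err(s) / s ^ d = √(P1 P2) exp (-(K(s) + d log s))` converges.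
-/

open Finset

theorem Matrix.IsSymm.dotProduct_mulVec_eq_of_mulVec_eq {n R : Type*} [Fintype n]
    [CommSemiring R] {A : Matrix n n R} (hA : A.IsSymm) {x y : n → R}
    (h : A *ᵥ x = A *ᵥ y) : x ⬝ᵥ (A *ᵥ x) = y ⬝ᵥ (A *ᵥ y) :=
  calc x ⬝ᵥ (A *ᵥ x) = x ⬝ᵥ (A *ᵥ y) := by rw [h]
    _ = (A *ᵥ x) ⬝ᵥ y := by rw [dotProduct_mulVec, ← mulVec_transpose, hA.eq]
    _ = y ⬝ᵥ (A *ᵥ y) := by rw [h, dotProduct_comm]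

theorem Matrix.PosSemidef.mul_mul_transpose_same_s12 {m n R : Type*} [Fintype n] [Finite m]
    [CommRing R] [PartialOrder R] [StarRing R] [TrivialStar R] {A : Matrix n n R}
    (hA : A.PosSemidef) (B : Matrix m n R) : (B * A * Bᵀ).PosSemidef := by
  simpa using hA.mul_mul_conjTranspose_same B

theorem Matrix.dotProduct_conjStarAlgAut_diagonal_mulVec {n : Type*} [Fintype n] [DecidableEq n]
    (U : unitaryGroup n ℝ) (f x : n → ℝ) :
    x ⬝ᵥ (Unitary.conjStarAlgAut ℝ _ U (diagonal f) *ᵥ x) =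
      ∑ i, f i * (star (U : Matrix n n ℝ) *ᵥ x) i ^ 2 := by
  rw [Unitary.conjStarAlgAut_apply, ← mulVec_mulVec, ← mulVec_mulVec, dotProduct_mulVec,
    ← mulVec_transpose, ← conjTranspose_eq_transpose_of_trivial, ← star_eq_conjTranspose]
  simp only [dotProduct, mulVec_diagonal]
  exact sum_congr rfl fun i _ => by ring

namespace Matrix.IsHermitian

variable {n : Type*} [Fintype n] [DecidableEq n] {A : Matrix n n ℝ} (hA : A.IsHermitian)

theorem eq_conj_diagonal :
    A = Unitary.conjStarAlgAut ℝ _ hA.eigenvectorUnitary (diagonal hA.eigenvalues) := by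
  simpa using hA.spectral_theorem

theorem add_smul_one_eq (s : ℝ) :
    A + s • 1 = Unitary.conjStarAlgAut ℝ _ hA.eigenvectorUnitary
      (diagonal fun i => hA.eigenvalues i + s) := by
  conv_lhs => rw [hA.eq_conj_diagonal]
  rw [← map_one (Unitary.conjStarAlgAut ℝ _ hA.eigenvectorUnitary), ← map_smul, ← map_add]
  congr 1
  ext i j
  by_cases h : i = j <;> simp [h]

theorem det_add_smul_one_s12 (s : ℝ) : (A + s • 1).det = ∏ i, (hA.eigenvalues i + s) := by
  rw [hA.add_smul_one_eq, Unitary.conjStarAlgAut_apply, det_mul_right_comm,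
    Unitary.mul_star_self_of_mem hA.eigenvectorUnitary.2, one_mul, det_diagonal]

theorem inv_add_smul_one_eq {s : ℝ} (hs : ∀ i, hA.eigenvalues i + s ≠ 0) :
    (A + s • 1)⁻¹ = Unitary.conjStarAlgAut ℝ _ hA.eigenvectorUnitary
      (diagonal fun i => (hA.eigenvalues i + s)⁻¹) := by
  refine inv_eq_left_inv ?_
  rw [hA.add_smul_one_eq, ← map_mul, diagonal_mul_diagonal]
  simp [inv_mul_cancel₀ (hs _)]

theorem dotProduct_mulVec_self_eq_sum (z : n → ℝ) :
    z ⬝ᵥ (A *ᵥ z) =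
      ∑ i, hA.eigenvalues i * (star (hA.eigenvectorUnitary : Matrix n n ℝ) *ᵥ z) i ^ 2 := by
  conv_lhs => rw [hA.eq_conj_diagonal]
  exact dotProduct_conjStarAlgAut_diagonal_mulVec _ _ _

theorem dotProduct_inv_add_smul_one_mulVec {s : ℝ} (hs : ∀ i, hA.eigenvalues i + s ≠ 0)
    (z : n → ℝ) :
    (A *ᵥ z) ⬝ᵥ ((A + s • 1)⁻¹ *ᵥ (A *ᵥ z)) =
      ∑ i, hA.eigenvalues i ^ 2 / (hA.eigenvalues i + s) *
        (star (hA.eigenvectorUnitary : Matrix n n ℝ) *ᵥ z) i ^ 2 := by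
  have hsymm : A.IsSymm := by simpa using hA
  have hmove : ∀ w, (A *ᵥ z) ⬝ᵥ w = z ⬝ᵥ (A *ᵥ w) := fun w => by
    rw [dotProduct_mulVec, ← mulVec_transpose, hsymm.eq]
  have hconj : A * (A + s • 1)⁻¹ * A = Unitary.conjStarAlgAut ℝ _ hA.eigenvectorUnitary
      (diagonal hA.eigenvalues * diagonal (fun i => (hA.eigenvalues i + s)⁻¹) *
        diagonal hA.eigenvalues) := by
    rw [map_mul, map_mul, ← hA.eq_conj_diagonal, hA.inv_add_smul_one_eq hs]
  rw [hmove, mulVec_mulVec, mulVec_mulVec, hconj, diagonal_mul_diagonal, diagonal_mul_diagonal,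
    dotProduct_conjStarAlgAut_diagonal_mulVec]
  exact sum_congr rfl fun i _ => by ring

theorem det_add_smul_one_eq_prod_mul_pow (s : ℝ) :
    (A + s • 1).det =
      (∏ i ∈ univ.filter (hA.eigenvalues · ≠ 0), (hA.eigenvalues i + s)) *
        s ^ (Fintype.card n - A.rank) := by
  rw [hA.det_add_smul_one_s12, ← prod_filter_mul_prod_filter_not univ (hA.eigenvalues · ≠ 0)]
  congr 1
  rw [prod_congr rfl fun i hi => by rw [(by simpa using (mem_filter.1 hi).2 :
      hA.eigenvalues i = 0), zero_add], prod_const, hA.rank_eq_card_non_zero_eigs,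
    Fintype.card_subtype, ← card_univ, ← card_filter_add_card_filter_not (s := univ)
      (hA.eigenvalues · ≠ 0), Nat.add_sub_cancel_left]

end Matrix.IsHermitian

theorem tendsto_sq_div_add_nhds_zero (a : ℝ) :
    Tendsto (fun s : ℝ => a ^ 2 / (a + s)) (𝓝 0) (𝓝 a) := by
  rcases eq_or_ne a 0 with rfl | ha
  · -- `0 ^ 2 / s = 0` for every `s`, including `s = 0`
    simp
  · have hcont : ContinuousAt (fun s : ℝ => a ^ 2 / (a + s)) 0 := by
      fun_prop (disch := simpa)
    simpa [sq, ha] using hcont.tendsto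

namespace Matrix.PosSemidef

variable {n : Type*} [Fintype n] [DecidableEq n] {A : Matrix n n ℝ}

theorem det_add_smul_one_pos_s12 (hA : A.PosSemidef) {s : ℝ} (hs : 0 < s) :
    0 < (A + s • 1).det := by
  rw [hA.1.det_add_smul_one_s12]
  exact prod_pos fun i _ => add_pos_of_nonneg_of_pos (hA.eigenvalues_nonneg i) hs

theorem tendsto_dotProduct_inv_add_smul_one_mulVec (hA : A.PosSemidef) (z : n → ℝ) :
    Tendsto (fun s : ℝ => (A *ᵥ z) ⬝ᵥ ((A + s • 1)⁻¹ *ᵥ (A *ᵥ z))) (𝓝[>] 0)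
      (𝓝 (z ⬝ᵥ (A *ᵥ z))) := by
  rw [hA.1.dotProduct_mulVec_self_eq_sum]
  refine Tendsto.congr' ?_ (tendsto_finsetSum _ fun i _ =>
    ((tendsto_sq_div_add_nhds_zero _).mul_const _).mono_left nhdsWithin_le_nhds)
  filter_upwards [self_mem_nhdsWithin] with s (hs : 0 < s)
  exact (hA.1.dotProduct_inv_add_smul_one_mulVec
    (fun i => (add_pos_of_nonneg_of_pos (hA.eigenvalues_nonneg i) hs).ne') z).symm

end Matrix.PosSemidef

section PseudoDeterminant

variable {n : ℕ} {A : Matrix (Fin n) (Fin n) ℝ}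

theorem Matrix.IsHermitian.pdet_eq (hA : A.IsHermitian) :
    pdet A = ∏ i ∈ univ.filter (hA.eigenvalues · ≠ 0), hA.eigenvalues i :=
  dif_pos hA

theorem Matrix.PosSemidef.pdet_pos (hA : A.PosSemidef) : 0 < pdet A := by
  rw [hA.1.pdet_eq]
  exact prod_pos fun i hi => (hA.eigenvalues_nonneg i).lt_of_ne' (mem_filter.1 hi).2

theorem Matrix.IsHermitian.tendsto_det_add_smul_one_div_pow (hA : A.IsHermitian) :
    Tendsto (fun s : ℝ => (A + s • 1).det / s ^ (n - A.rank)) (𝓝[≠] 0) (𝓝 (pdet A)) := by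
  have hcont : Continuous fun s : ℝ =>
      ∏ i ∈ univ.filter (hA.eigenvalues · ≠ 0), (hA.eigenvalues i + s) := by
    fun_prop
  have hlim := (hcont.tendsto 0).mono_left (nhdsWithin_le_nhds : 𝓝[≠] (0 : ℝ) ≤ 𝓝 0)
  simp only [add_zero, ← hA.pdet_eq] at hlim
  refine hlim.congr' ?_
  filter_upwards [self_mem_nhdsWithin] with s (hs : s ≠ 0)
  rw [hA.det_add_smul_one_eq_prod_mul_pow, Fintype.card_fin,
    mul_div_cancel_right₀ _ (pow_ne_zero _ hs)]

theorem Matrix.PosSemidef.tendsto_log_det_add_smul_one_sub (hA : A.PosSemidef) :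
    Tendsto (fun s : ℝ => log (A + s • 1).det - ((n : ℝ) - A.rank) * log s) (𝓝[>] 0)
      (𝓝 (log (pdet A))) := by
  refine ((hA.1.tendsto_det_add_smul_one_div_pow.mono_left
    (nhdsWithin_mono _ fun _ hs => (Set.mem_Ioi.1 hs).ne')).log hA.pdet_pos.ne').congr' ?_
  filter_upwards [self_mem_nhdsWithin] with s (hs : 0 < s)
  rw [log_div (hA.det_add_smul_one_pos_s12 hs).ne' (pow_ne_zero _ hs.ne'), log_pow,
    Nat.cast_sub (rank_le_height A)]

end PseudoDeterminant

theorem log_two_rpow_neg_mul_div_sqrt (m : ℝ) {a b c : ℝ} (ha : 0 < a) (hb : 0 < b)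
    (hc : 0 < c) :
    log ((2 : ℝ) ^ (-m) * a / √(b * c)) = log a - m * log 2 - (log b + log c) / 2 := by
  rw [log_div (by positivity) (by positivity), log_mul (by positivity) ha.ne', log_rpow two_pos,
    log_sqrt (by positivity), log_mul hb.ne' hc.ne']
  ring

theorem Kb_eq {M N : ℕ} (Φ : Matrix (Fin M) (Fin N) ℝ) (S1 S2 : Matrix (Fin N) (Fin N) ℝ)
    (μ1 μ2 : Fin N → ℝ) {s : ℝ} (hC : 0 < (Φ * (S1 + S2) * Φᵀ + s • 1).det)
    (h1 : 0 < (Φ * S1 * Φᵀ + s • 1).det) (h2 : 0 < (Φ * S2 * Φᵀ + s • 1).det) :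
    Kb Φ S1 S2 μ1 μ2 s =
      1 / 4 * ((Φ *ᵥ (μ1 - μ2)) ⬝ᵥ ((Φ * (S1 + S2) * Φᵀ + s • 1)⁻¹ *ᵥ (Φ *ᵥ (μ1 - μ2)))) +
      1 / 2 * (log (Φ * (S1 + S2) * Φᵀ + s • 1).det - M * log 2 -
        (log (Φ * S1 * Φᵀ + s • 1).det + log (Φ * S2 * Φᵀ + s • 1).det) / 2) := by
  have hinv : ((1 / 2 : ℝ) • (Φ * (S1 + S2) * Φᵀ + s • 1))⁻¹ =
      (2 : ℝ) • (Φ * (S1 + S2) * Φᵀ + s • 1)⁻¹ := by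
    refine inv_eq_left_inv ?_
    rw [smul_mul_smul_comm, nonsing_inv_mul _ (isUnit_iff_ne_zero.2 hC.ne')]
    norm_num
  have hdet : ((1 / 2 : ℝ) • (Φ * (S1 + S2) * Φᵀ + s • 1)).det =
      (2 : ℝ) ^ (-(M : ℝ)) * (Φ * (S1 + S2) * Φᵀ + s • 1).det := by
    rw [det_smul, Fintype.card_fin, rpow_neg zero_le_two, rpow_natCast, one_div, inv_pow]
  rw [Kb, hinv, hdet, log_two_rpow_neg_mul_div_sqrt _ hC h1 h2, smul_mulVec, dotProduct_smul,
    smul_eq_mul]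
  ring

theorem theorem3_in_image_general (M N : ℕ)
    (Φ : Matrix (Fin M) (Fin N) ℝ) (S1 S2 : Matrix (Fin N) (Fin N) ℝ)
    (hS1 : S1.PosSemidef) (hS2 : S2.PosSemidef) (μ1 μ2 : Fin N → ℝ)
    (P1 P2 : ℝ)
    (z : Fin M → ℝ) (hz : Φ *ᵥ (μ1 - μ2) = (Φ * (S1 + S2) * Φᵀ) *ᵥ z)
    (d : ℝ)
    (hd : d = (2 * ((Φ * (S1 + S2) * Φᵀ).rank : ℝ) - ((Φ * S1 * Φᵀ).rank : ℝ)
      - ((Φ * S2 * Φᵀ).rank : ℝ)) / 4) :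
    Filter.Tendsto (fun s : ℝ => Perr Φ S1 S2 μ1 μ2 P1 P2 s / s ^ d) (𝓝[>] 0)
      (𝓝 (Real.exp (-(1/4) * (z ⬝ᵥ ((Φ * (S1 + S2) * Φᵀ) *ᵥ z))) *
        (Real.sqrt (P1 * P2) *
          ((2:ℝ) ^ (-(M:ℝ)) * pdet (Φ * (S1 + S2) * Φᵀ) /
            Real.sqrt (pdet (Φ * S1 * Φᵀ) * pdet (Φ * S2 * Φᵀ))) ^ (-(1:ℝ)/2)))) ∧
    Real.exp (-(1/4) * (z ⬝ᵥ ((Φ * (S1 + S2) * Φᵀ) *ᵥ z))) ≤ 1 ∧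
    (∀ z' : Fin M → ℝ, (Φ * (S1 + S2) * Φᵀ) *ᵥ z' = Φ *ᵥ (μ1 - μ2) →
      z' ⬝ᵥ ((Φ * (S1 + S2) * Φᵀ) *ᵥ z') = z ⬝ᵥ ((Φ * (S1 + S2) * Φᵀ) *ᵥ z)) := by
  have hC := (hS1.add hS2).mul_mul_transpose_same_s12 Φ
  have h1 := hS1.mul_mul_transpose_same_s12 Φ
  have h2 := hS2.mul_mul_transpose_same_s12 Φ
  refine ⟨?_, exp_le_one_iff.2 ?_, fun z' hz' =>
    (isHermitian_iff_isSymm.1 hC.1).dotProduct_mulVec_eq_of_mulVec_eq (hz'.trans hz)⟩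
  · have hQ := (hC.tendsto_dotProduct_inv_add_smul_one_mulVec z).const_mul (1 / 4)
    have hL := ((hC.tendsto_log_det_add_smul_one_sub.sub_const (M * log 2)).sub
      ((h1.tendsto_log_det_add_smul_one_sub.add
        h2.tendsto_log_det_add_smul_one_sub).div_const 2)).const_mul (1 / 2)
    convert ((hQ.add hL).neg.rexp.const_mul (√(P1 * P2))).congr' ?_ using 2
    · have hX : 0 < (2 : ℝ) ^ (-(M : ℝ)) * pdet (Φ * (S1 + S2) * Φᵀ) /
          √(pdet (Φ * S1 * Φᵀ) * pdet (Φ * S2 * Φᵀ)) :=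
        div_pos (mul_pos (rpow_pos_of_pos two_pos _) hC.pdet_pos)
          (sqrt_pos.2 (mul_pos h1.pdet_pos h2.pdet_pos))
      rw [rpow_def_of_pos hX, log_two_rpow_neg_mul_div_sqrt _ hC.pdet_pos h1.pdet_pos
        h2.pdet_pos, mul_left_comm, ← exp_add]
      congr 2
      ring
    · filter_upwards [self_mem_nhdsWithin] with s (hs : 0 < s)
      rw [Perr, Kb_eq Φ S1 S2 μ1 μ2 (hC.det_add_smul_one_pos_s12 hs) (h1.det_add_smul_one_pos_s12 hs)
        (h2.det_add_smul_one_pos_s12 hs), hz, rpow_def_of_pos hs, mul_div_assoc, ← exp_sub, hd]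
      congr 2
      ring
  · have hq := hC.dotProduct_mulVec_nonneg z
    rw [star_trivial] at hq
    linarith

/-- Theorem 3, in-image case: let `C = Φ(Σ1+Σ2)Φᵀ` and suppose
`Φ(μ1-μ2) = C z` lies in the column space of `C`, with `(r1+r2)/2 < r12` and
`d = (2 r12 - r1 - r2)/4`. Then `lim_{σ²→0⁺} P̄_err(σ²)/(σ²)^d =
exp(-(1/4) zᵀ C z) · sqrt(P1 P2) (2^{-M} v12/sqrt(v1 v2))^{-1/2}`; the
diversity order is as in the zero-mean case, the extra factor satisfies
`exp(-(1/4) zᵀ C z) ≤ 1`, and `zᵀ C z` does not depend on the choice of `z`. -/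
theorem theorem3_in_image (M N : ℕ) (hM : 0 < M) (hN : 0 < N)
    (Φ : Matrix (Fin M) (Fin N) ℝ) (S1 S2 : Matrix (Fin N) (Fin N) ℝ)
    (hS1 : S1.PosSemidef) (hS2 : S2.PosSemidef) (μ1 μ2 : Fin N → ℝ)
    (P1 P2 : ℝ) (hP1 : 0 < P1) (hP2 : 0 < P2) (hP : P1 + P2 = 1)
    (z : Fin M → ℝ) (hz : Φ *ᵥ (μ1 - μ2) = (Φ * (S1 + S2) * Φᵀ) *ᵥ z)
    (hrank : (Φ * S1 * Φᵀ).rank + (Φ * S2 * Φᵀ).rank < 2 * (Φ * (S1 + S2) * Φᵀ).rank)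
    (d : ℝ)
    (hd : d = (2 * ((Φ * (S1 + S2) * Φᵀ).rank : ℝ) - ((Φ * S1 * Φᵀ).rank : ℝ)
      - ((Φ * S2 * Φᵀ).rank : ℝ)) / 4) :
    Filter.Tendsto (fun s : ℝ => Perr Φ S1 S2 μ1 μ2 P1 P2 s / s ^ d) (𝓝[>] 0)
      (𝓝 (Real.exp (-(1/4) * (z ⬝ᵥ ((Φ * (S1 + S2) * Φᵀ) *ᵥ z))) *
        (Real.sqrt (P1 * P2) *
          ((2:ℝ) ^ (-(M:ℝ)) * pdet (Φ * (S1 + S2) * Φᵀ) /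
            Real.sqrt (pdet (Φ * S1 * Φᵀ) * pdet (Φ * S2 * Φᵀ))) ^ (-(1:ℝ)/2)))) ∧
    Real.exp (-(1/4) * (z ⬝ᵥ ((Φ * (S1 + S2) * Φᵀ) *ᵥ z))) ≤ 1 ∧
    (∀ z' : Fin M → ℝ, (Φ * (S1 + S2) * Φᵀ) *ᵥ z' = Φ *ᵥ (μ1 - μ2) →
      z' ⬝ᵥ ((Φ * (S1 + S2) * Φᵀ) *ᵥ z') = z ⬝ᵥ ((Φ * (S1 + S2) * Φᵀ) *ᵥ z)) :=
  theorem3_in_image_general M N Φ S1 S2 hS1 hS2 μ1 μ2 P1 P2 z hz d hd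
end
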